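/- arXiv:2503.10591 — 2 statements merged into one kernel-verified Lean document; each statement's English description precedes it below -/
import Mathlib

section
/- Define the finite-population covariance S_{jj'} = (1/(N−1)) Σ_{i=1}^N (Y_i(j) − P_j)(Y_i(j') − P_{j'}). Then for any two distinct treatments j ≠ j', the identity S²_{j−j'} = S_j² + S_{j'}² − 2 S_{jj'} holds, and consequently under a completely randomized assignment Cov(p_j, p_{j'}) = −S_{jj'}/N. -/
open Finset

/-- The finset of completely randomized assignments of `N` units to treatments in `J`
with group sizes `Nj`. -/
def assignments (N : ℕ) {J : Type*} [Fintype J] [DecidableEq J] (Nj : J → ℕ) :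
    Finset (Fin N → J) :=
  Finset.univ.filter fun T => ∀ j, (Finset.univ.filter fun i => T i = j).card = Nj j

/-- Expectation with respect to the uniform distribution on completely randomized
assignments. -/
noncomputable def expect {N : ℕ} {J : Type*} [Fintype J] [DecidableEq J]
    (Nj : J → ℕ) (f : (Fin N → J) → ℝ) : ℝ :=
  (∑ T ∈ assignments N Nj, f T) / ((assignments N Nj).card : ℝ)

/-- Variance with respect to the randomization distribution. -/
noncomputable def rvar {N : ℕ} {J : Type*} [Fintype J] [DecidableEq J]
    (Nj : J → ℕ) (f : (Fin N → J) → ℝ) : ℝ :=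
  expect Nj fun T => (f T - expect Nj f) ^ 2

/-- Covariance with respect to the randomization distribution. -/
noncomputable def rcov {N : ℕ} {J : Type*} [Fintype J] [DecidableEq J]
    (Nj : J → ℕ) (f g : (Fin N → J) → ℝ) : ℝ :=
  expect Nj fun T => (f T - expect Nj f) * (g T - expect Nj g)

/-- Observed group mean `p_j` of treatment `j` under assignment `T`. -/
noncomputable def pObs {N : ℕ} {J : Type*} [DecidableEq J]
    (Y : Fin N → J → ℝ) (Nj : J → ℕ) (j : J) (T : Fin N → J) : ℝ :=
  (∑ i ∈ Finset.univ.filter fun i => T i = j, Y i j) / (Nj j : ℝ)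

/-- Population mean `P_j`. -/
noncomputable def Pmean {N : ℕ} {J : Type*} (Y : Fin N → J → ℝ) (j : J) : ℝ :=
  (∑ i, Y i j) / (N : ℝ)

/-- Population variance `S_j²`. -/
noncomputable def S2 {N : ℕ} {J : Type*} (Y : Fin N → J → ℝ) (j : J) : ℝ :=
  (∑ i, (Y i j - Pmean Y j) ^ 2) / ((N : ℝ) - 1)

/-- Variance of unit-level differences `S²_{j-j'}`. -/
noncomputable def S2diff {N : ℕ} {J : Type*} (Y : Fin N → J → ℝ) (j j' : J) : ℝ :=
  (∑ i, (Y i j - Y i j' - (Pmean Y j - Pmean Y j')) ^ 2) / ((N : ℝ) - 1)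

/-- Finite-population covariance `S_{jj'}`. -/
noncomputable def Scov {N : ℕ} {J : Type*} (Y : Fin N → J → ℝ) (j j' : J) : ℝ :=
  (∑ i, (Y i j - Pmean Y j) * (Y i j' - Pmean Y j')) / ((N : ℝ) - 1)

open scoped BigOperators

/-!
Write `p_j = ∑ᵢ (Y_i(j) / N_j) W_i^j`, where `W_i^j` indicates that unit `i` receives treatment
`j`; the randomization covariance is bilinear, so everything reduces to `Cov(W_i^j, W_k^{j'})`.
Relabelling the units preserves the uniform distribution on assignments, so `E W_i^j` does not
depend on `i` and, since `∑ᵢ W_i^j = N_j`, equals `N_j / N`; for the same reason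
`Cov(W_i^j, W_k^{j'})` takes one value for `i = k` and another for `i ≠ k`. Since `j ≠ j'`,
`W_i^j W_i^{j'} = 0`, which gives the diagonal value `-N_j N_{j'} / N²`; and
`∑ₖ Cov(W_i^j, W_k^{j'}) = Cov(W_i^j, N_{j'}) = 0` then forces the off-diagonal value
`N_j N_{j'} / (N² (N - 1))`.
-/

section Randomization

variable {N : ℕ} {J : Type*} [Fintype J] [DecidableEq J] {Nj : J → ℕ}

lemma mem_assignments {T : Fin N → J} :
    T ∈ assignments N Nj ↔ ∀ j, (univ.filter fun i => T i = j).card = Nj j := by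
  simp [assignments]

lemma comp_perm_mem_assignments (σ : Equiv.Perm (Fin N)) {T : Fin N → J}
    (hT : T ∈ assignments N Nj) : T ∘ σ ∈ assignments N Nj := by
  rw [mem_assignments] at hT ⊢
  intro j
  rw [← hT j, card_filter, card_filter]
  exact Equiv.sum_comp σ fun i => if T i = j then 1 else 0

lemma assignments_nonempty (hsum : ∑ j, Nj j = N) : (assignments N Nj).Nonempty := by
  have hcard : Fintype.card ((j : J) × Fin (Nj j)) = Fintype.card (Fin N) := by
    simp [Fintype.card_sigma, hsum]
  obtain ⟨e⟩ := Fintype.card_eq.mp hcard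
  refine ⟨fun i => (e.symm i).1, mem_assignments.mpr fun j => ?_⟩
  rw [card_filter, Equiv.sum_comp e.symm fun s : (j : J) × Fin (Nj j) => if s.1 = j then 1 else 0,
    ← Finset.univ_sigma_univ, Finset.sum_sigma]
  simp [apply_ite Finset.card]

lemma expect_eq_finsetExpect (f : (Fin N → J) → ℝ) :
    expect Nj f = 𝔼 T ∈ assignments N Nj, f T :=
  (Finset.expect_eq_sum_div_card _ _).symm

lemma expect_sum {ι : Type*} (s : Finset ι) (f : ι → (Fin N → J) → ℝ) :
    expect Nj (fun T => ∑ i ∈ s, f i T) = ∑ i ∈ s, expect Nj (f i) := by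
  simp only [expect_eq_finsetExpect]
  exact Finset.expect_sum_comm _ _ _

lemma expect_const_mul (c : ℝ) (f : (Fin N → J) → ℝ) :
    expect Nj (fun T => c * f T) = c * expect Nj f := by
  simp only [expect_eq_finsetExpect]
  exact (Finset.mul_expect _ _ _).symm

lemma expect_eq_of_forall_mem (hne : (assignments N Nj).Nonempty) {f : (Fin N → J) → ℝ} {c : ℝ}
    (hf : ∀ T ∈ assignments N Nj, f T = c) : expect Nj f = c := by
  rw [expect_eq_finsetExpect, Finset.expect_congr rfl hf, Finset.expect_const hne]

lemma expect_comp_perm (σ : Equiv.Perm (Fin N)) (f : (Fin N → J) → ℝ) :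
    expect Nj (fun T => f (T ∘ σ)) = expect Nj f := by
  simp only [expect_eq_finsetExpect]
  exact Finset.expect_nbij' (· ∘ σ) (· ∘ σ.symm) (fun T => comp_perm_mem_assignments σ)
    (fun T => comp_perm_mem_assignments σ.symm) (fun T _ => by ext; simp)
    (fun T _ => by ext; simp) fun T _ => rfl

lemma rcov_comm (f g : (Fin N → J) → ℝ) : rcov Nj f g = rcov Nj g f := by
  simp only [rcov, mul_comm]

lemma rcov_sum_right {ι : Type*} (s : Finset ι) (f : (Fin N → J) → ℝ)
    (g : ι → (Fin N → J) → ℝ) :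
    rcov Nj f (fun T => ∑ k ∈ s, g k T) = ∑ k ∈ s, rcov Nj f (g k) := by
  simp only [rcov, expect_sum, ← Finset.sum_sub_distrib, Finset.mul_sum]

lemma rcov_sum_left {ι : Type*} (s : Finset ι) (f : ι → (Fin N → J) → ℝ)
    (g : (Fin N → J) → ℝ) :
    rcov Nj (fun T => ∑ i ∈ s, f i T) g = ∑ i ∈ s, rcov Nj (f i) g := by
  simp only [rcov_comm _ g, rcov_sum_right]

lemma rcov_const_mul_right (c : ℝ) (f g : (Fin N → J) → ℝ) :
    rcov Nj f (fun T => c * g T) = c * rcov Nj f g := by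
  simp only [rcov, expect_const_mul, ← mul_sub, mul_left_comm _ c]

lemma rcov_const_mul_left (c : ℝ) (f g : (Fin N → J) → ℝ) :
    rcov Nj (fun T => c * f T) g = c * rcov Nj f g := by
  rw [rcov_comm, rcov_const_mul_right, rcov_comm]

lemma rcov_sum_mul_sum_mul {ι κ : Type*} (s : Finset ι) (t : Finset κ) (a : ι → ℝ) (b : κ → ℝ)
    (f : ι → (Fin N → J) → ℝ) (g : κ → (Fin N → J) → ℝ) :
    rcov Nj (fun T => ∑ i ∈ s, a i * f i T) (fun T => ∑ k ∈ t, b k * g k T) =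
      ∑ i ∈ s, ∑ k ∈ t, a i * b k * rcov Nj (f i) (g k) := by
  rw [rcov_sum_left]
  refine sum_congr rfl fun i _ => ?_
  rw [rcov_const_mul_left, rcov_sum_right, mul_sum]
  refine sum_congr rfl fun k _ => ?_
  rw [rcov_const_mul_right, mul_assoc]

lemma rcov_eq_expect_mul_sub (hne : (assignments N Nj).Nonempty) (f g : (Fin N → J) → ℝ) :
    rcov Nj f g = expect Nj (fun T => f T * g T) - expect Nj f * expect Nj g := by
  simp only [rcov, expect_eq_finsetExpect]
  set a := 𝔼 T ∈ assignments N Nj, f T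
  set b := 𝔼 T ∈ assignments N Nj, g T
  have hexpand : ∀ T, (f T - a) * (g T - b) = (f T * g T - a * g T) + (a * b - b * f T) :=
    fun T => by ring
  rw [Finset.expect_congr rfl fun T _ => hexpand T, Finset.expect_add_distrib,
    Finset.expect_sub_distrib, Finset.expect_sub_distrib, Finset.expect_const hne]
  simp only [← Finset.mul_expect]
  ring

lemma rcov_eq_zero_of_forall_mem (f : (Fin N → J) → ℝ) {g : (Fin N → J) → ℝ} {c : ℝ}
    (hg : ∀ T ∈ assignments N Nj, g T = c) : rcov Nj f g = 0 := by
  rw [rcov, expect_eq_finsetExpect]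
  refine Finset.expect_eq_zero fun T hT => ?_
  rw [hg T hT, expect_eq_of_forall_mem ⟨T, hT⟩ hg, sub_self, mul_zero]

lemma rcov_comp_perm (σ : Equiv.Perm (Fin N)) (f g : (Fin N → J) → ℝ) :
    rcov Nj (fun T => f (T ∘ σ)) (fun T => g (T ∘ σ)) = rcov Nj f g := by
  simp only [rcov, expect_comp_perm σ f, expect_comp_perm σ g]
  exact expect_comp_perm σ fun T => (f T - expect Nj f) * (g T - expect Nj g)

end Randomization

section Treated

variable {N : ℕ} {J : Type*} [DecidableEq J] {Nj : J → ℕ}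

def treated (i : Fin N) (j : J) (T : Fin N → J) : ℝ := if T i = j then 1 else 0

lemma treated_comp_perm (σ : Equiv.Perm (Fin N)) (i : Fin N) (j : J) (T : Fin N → J) :
    treated i j (T ∘ σ) = treated (σ i) j T := rfl

lemma treated_mul_treated_of_ne {j j' : J} (hjj : j ≠ j') (i : Fin N) (T : Fin N → J) :
    treated i j T * treated i j' T = 0 := by
  unfold treated
  split_ifs with h h' <;> simp_all

lemma pObs_eq_sum_treated (Y : Fin N → J → ℝ) (j : J) (T : Fin N → J) :
    pObs Y Nj j T = ∑ i, Y i j / Nj j * treated i j T := by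
  simp only [pObs, treated, Finset.sum_filter, Finset.sum_div, ite_div, zero_div, mul_ite, mul_one,
    mul_zero]

variable [Fintype J]

lemma sum_treated {T : Fin N → J} (hT : T ∈ assignments N Nj) (j : J) :
    ∑ i, treated i j T = Nj j := by
  simp only [treated, Finset.sum_boole, mem_assignments.mp hT j]

lemma expect_treated (hne : (assignments N Nj).Nonempty) (i : Fin N) (j : J) :
    expect Nj (treated i j) = Nj j / N := by
  have hsymm : ∀ k, expect Nj (treated k j) = expect Nj (treated i j) := fun k => by
    rw [← expect_comp_perm (Equiv.swap i k) (treated k j)]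
    simp only [treated_comp_perm, Equiv.swap_apply_right]
  have htotal : ∑ k : Fin N, expect Nj (treated k j) = Nj j := by
    rw [← expect_sum]
    exact expect_eq_of_forall_mem hne fun T hT => sum_treated hT j
  rw [Finset.sum_congr rfl fun k _ => hsymm k, sum_const, card_univ, Fintype.card_fin,
    nsmul_eq_mul] at htotal
  have hN : (N : ℝ) ≠ 0 := Nat.cast_ne_zero.mpr (Fin.pos i).ne'
  rw [← htotal]
  field_simp

lemma rcov_treated_self (hne : (assignments N Nj).Nonempty) {j j' : J} (hjj : j ≠ j')
    (i : Fin N) : rcov Nj (treated i j) (treated i j') = -(Nj j * Nj j' / N ^ 2) := by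
  have hzero : expect Nj (fun T => treated i j T * treated i j' T) = 0 := by
    rw [expect_eq_finsetExpect]
    exact Finset.expect_eq_zero fun T _ => treated_mul_treated_of_ne hjj i T
  rw [rcov_eq_expect_mul_sub hne, hzero, expect_treated hne, expect_treated hne]
  ring

lemma rcov_treated_of_ne (hne : (assignments N Nj).Nonempty) {j j' : J} (hjj : j ≠ j')
    {i k : Fin N} (hik : i ≠ k) :
    rcov Nj (treated i j) (treated k j') = Nj j * Nj j' / (N ^ 2 * (N - 1)) := by
  have hsymm : ∀ k' ∈ univ.erase i,
      rcov Nj (treated i j) (treated k' j') = rcov Nj (treated i j) (treated k j') := by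
    intro k' hk'
    rw [← rcov_comp_perm (Equiv.swap k k') (treated i j) (treated k j')]
    simp only [treated_comp_perm, Equiv.swap_apply_of_ne_of_ne hik (ne_of_mem_erase hk').symm,
      Equiv.swap_apply_left]
  have htotal : ∑ k', rcov Nj (treated i j) (treated k' j') = 0 := by
    rw [← rcov_sum_right]
    exact rcov_eq_zero_of_forall_mem _ fun T hT => sum_treated hT j'
  rw [← Finset.add_sum_erase _ _ (mem_univ i), Finset.sum_congr rfl hsymm, sum_const,
    card_erase_of_mem (mem_univ i), card_univ, Fintype.card_fin, nsmul_eq_mul,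
    rcov_treated_self hne hjj] at htotal
  have hN1 : (N : ℝ) - 1 ≠ 0 := by
    have := Fin.val_ne_of_ne hik
    have : (2 : ℝ) ≤ N := by exact_mod_cast (show 2 ≤ N by omega)
    linarith
  rw [Nat.cast_pred (Fin.pos i)] at htotal
  field_simp at htotal ⊢
  linarith

lemma rcov_treated (hN : 2 ≤ N) (hne : (assignments N Nj).Nonempty) {j j' : J} (hjj : j ≠ j')
    (i k : Fin N) : rcov Nj (treated i j) (treated k j') =
      Nj j * Nj j' / (N ^ 2 * (N - 1)) * (1 - if i = k then (N : ℝ) else 0) := by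
  rcases eq_or_ne i k with rfl | hik
  · have hN1 : (N : ℝ) - 1 ≠ 0 := by
      have : (2 : ℝ) ≤ N := by exact_mod_cast hN
      linarith
    rw [rcov_treated_self hne hjj, if_pos rfl]
    field_simp
    ring
  · rw [rcov_treated_of_ne hne hjj hik, if_neg hik, sub_zero, mul_one]

end Treated

lemma sum_sum_mul_one_sub_ite {ι : Type*} [Fintype ι] [DecidableEq ι] (a b : ι → ℝ) (c x : ℝ) :
    ∑ i, ∑ k, a i * b k * (c * (1 - if i = k then x else 0)) =
      c * ((∑ i, a i) * (∑ k, b k) - x * ∑ i, a i * b i) := by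
  have hsplit : ∀ i k, a i * b k * (c * (1 - if i = k then x else 0)) =
      c * (a i * b k) - if i = k then c * x * (a i * b k) else 0 := fun i k => by
    split_ifs <;> ring
  simp only [hsplit, sum_sub_distrib, sum_ite_eq, mem_univ, if_true, ← mul_sum, sum_mul_sum]
  ring

section Population

variable {N : ℕ} {J : Type*}

lemma sum_eq_mul_Pmean (Y : Fin N → J → ℝ) (j : J) : ∑ i, Y i j = N * Pmean Y j := by
  rcases eq_or_ne N 0 with rfl | hN
  · simp
  · rw [Pmean, mul_div_cancel₀ _ (Nat.cast_ne_zero.mpr hN)]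

lemma sum_sub_Pmean_mul_sub_Pmean (Y : Fin N → J → ℝ) (j j' : J) :
    ∑ i, (Y i j - Pmean Y j) * (Y i j' - Pmean Y j') =
      ∑ i, Y i j * Y i j' - N * Pmean Y j * Pmean Y j' := by
  have hexpand : ∀ i, (Y i j - Pmean Y j) * (Y i j' - Pmean Y j') =
      Y i j * Y i j' - Pmean Y j' * Y i j - Pmean Y j * Y i j' + Pmean Y j * Pmean Y j' :=
    fun i => by ring
  simp only [hexpand, sum_add_distrib, sum_sub_distrib, ← Finset.mul_sum, sum_eq_mul_Pmean,
    sum_const, card_univ, Fintype.card_fin, nsmul_eq_mul]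
  ring

lemma S2diff_eq_S2_add_S2_sub_two_mul_Scov (Y : Fin N → J → ℝ) (j j' : J) :
    S2diff Y j j' = S2 Y j + S2 Y j' - 2 * Scov Y j j' := by
  have hexpand : ∀ i, (Y i j - Y i j' - (Pmean Y j - Pmean Y j')) ^ 2 =
      (Y i j - Pmean Y j) ^ 2 + (Y i j' - Pmean Y j') ^ 2 -
        2 * ((Y i j - Pmean Y j) * (Y i j' - Pmean Y j')) :=
    fun i => by ring
  simp only [S2diff, S2, Scov, hexpand, sum_sub_distrib, sum_add_distrib, ← Finset.mul_sum]
  ring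

end Population

lemma rcov_pObs {N : ℕ} {J : Type*} [Fintype J] [DecidableEq J] {Nj : J → ℕ} (hN : 2 ≤ N)
    (hne : (assignments N Nj).Nonempty) (Y : Fin N → J → ℝ) {j j' : J} (hjj : j ≠ j')
    (hj : Nj j ≠ 0) (hj' : Nj j' ≠ 0) :
    rcov Nj (pObs Y Nj j) (pObs Y Nj j') = -Scov Y j j' / N := by
  have hpObs : ∀ j, pObs Y Nj j = fun T => ∑ i, Y i j / Nj j * treated i j T :=
    fun j => funext (pObs_eq_sum_treated Y j)
  rw [hpObs, hpObs, rcov_sum_mul_sum_mul]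
  simp only [rcov_treated hN hne hjj]
  rw [sum_sum_mul_one_sub_ite, ← sum_div, ← sum_div]
  simp only [div_mul_div_comm, ← sum_div, sum_eq_mul_Pmean]
  have hN2 : (2 : ℝ) ≤ N := by exact_mod_cast hN
  have hN0 : (N : ℝ) ≠ 0 := by positivity
  have hN1 : (N : ℝ) - 1 ≠ 0 := by linarith
  have hNj : (Nj j : ℝ) ≠ 0 := Nat.cast_ne_zero.mpr hj
  have hNj' : (Nj j' : ℝ) ≠ 0 := Nat.cast_ne_zero.mpr hj'
  rw [Scov, sum_sub_Pmean_mul_sub_Pmean]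
  field_simp
  ring

/-- For distinct treatments `j ≠ j'`, `S²_{j-j'} = S_j² + S_{j'}² - 2 S_{jj'}`, and
consequently under a completely randomized assignment `Cov(p_j, p_{j'}) = -S_{jj'}/N`. -/
theorem S2diff_and_rcov {N J : ℕ} (hN : 2 ≤ N)
    (Y : Fin N → Fin J → ℝ) (Nj : Fin J → ℕ)
    (hpos : ∀ j, 1 ≤ Nj j) (hsum : ∑ j, Nj j = N) :
    ∀ j j' : Fin J, j ≠ j' →
      S2diff Y j j' = S2 Y j + S2 Y j' - 2 * Scov Y j j' ∧
      rcov Nj (pObs Y Nj j) (pObs Y Nj j') = -(Scov Y j j') / (N : ℝ) := by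
  intro j j' hjj
  exact ⟨S2diff_eq_S2_add_S2_sub_two_mul_Scov Y j j',
    rcov_pObs hN (assignments_nonempty hsum) Y hjj (Nat.one_le_iff_ne_zero.mp (hpos j))
    (Nat.one_le_iff_ne_zero.mp (hpos j'))⟩
end

section
/- Variance of the factorial effect estimator: in a completely randomized 2^K factorial experiment, for every nonempty subset ℓ ⊆ {1,…,K}, Var(τ̂_ℓ) = 2^{−2(K−1)} Σ_{z ∈ {0,1}^K} S_z²/N_z − S²_{τ_ℓ}/N. -/
open Finset

/-- Contrast coefficient `λ_{ℓ,z} = Π_{k∈ℓ} (2 z_k - 1)` for a subset `ℓ` of factors and a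
treatment `z ∈ {0,1}^K`. -/
def lam {K : ℕ} (ℓ : Finset (Fin K)) (z : Fin K → Bool) : ℝ :=
  ∏ k ∈ ℓ, (if z k then 1 else -1)

/-- Finite-population factorial effect `τ_ℓ = 2^{-(K-1)} Σ_z λ_{ℓ,z} P_z`. -/
noncomputable def tauFP {N K : ℕ} (Y : Fin N → (Fin K → Bool) → ℝ) (ℓ : Finset (Fin K)) : ℝ :=
  (1 / 2 ^ (K - 1)) * ∑ z, lam ℓ z * Pmean Y z

/-- Unit-level factorial effect `τ_{i,ℓ} = 2^{-(K-1)} Σ_z λ_{ℓ,z} Y_i(z)`. -/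
noncomputable def tauUnit {N K : ℕ} (Y : Fin N → (Fin K → Bool) → ℝ) (i : Fin N)
    (ℓ : Finset (Fin K)) : ℝ :=
  (1 / 2 ^ (K - 1)) * ∑ z, lam ℓ z * Y i z

/-- Plug-in factorial effect estimator `τ̂_ℓ = 2^{-(K-1)} Σ_z λ_{ℓ,z} p_z`. -/
noncomputable def tauHat {N K : ℕ} (Y : Fin N → (Fin K → Bool) → ℝ)
    (Nj : (Fin K → Bool) → ℕ) (ℓ : Finset (Fin K)) (T : Fin N → (Fin K → Bool)) : ℝ :=
  (1 / 2 ^ (K - 1)) * ∑ z, lam ℓ z * pObs Y Nj z T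

/-- Variance of unit-level factorial effects `S²_{τ_ℓ}`. -/
noncomputable def S2tau {N K : ℕ} (Y : Fin N → (Fin K → Bool) → ℝ) (ℓ : Finset (Fin K)) : ℝ :=
  (∑ i, (tauUnit Y i ℓ - tauFP Y ℓ) ^ 2) / ((N : ℝ) - 1)


/-!
Write each observed mean as `p_j = P_j + N_j⁻¹ Σ_i (Y_i(j) - P_j) 1{T i = j}`. The moments
`E[1{T i = j} 1{T i' = j'}]` are invariant under relabelling the units, so they take one value on
the diagonal `i = i'` and another off it; as the centred outcomes sum to zero, only the difference
of the two values survives, and it is read off from `Σ_i 1{T i = j} = N_j`. This yields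
`Var(Σ_j c_j p_j) = Σ_j c_j² S_j² / N_j - S²(Σ_j c_j Y(j)) / N` for arbitrary coefficients; for
`τ̂_ℓ` the coefficients are `λ_{ℓ,z} / 2^(K-1)`, whose squares are all `2^(-2(K-1))`.
-/

lemma sum_sum_mul_mul_ite_eq {ι R : Type*} [Fintype ι] [DecidableEq ι] [CommRing R]
    (u v : ι → R) (hu : ∑ i, u i = 0) (α β : R) :
    ∑ i, ∑ i', u i * v i' * (if i = i' then α else β) = (α - β) * ∑ i, u i * v i := by
  have hsplit : ∀ i i', u i * v i' * (if i = i' then α else β)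
      = u i * v i' * β + if i = i' then (α - β) * (u i * v i) else 0 := by
    intro i i'
    split_ifs with h
    · subst h; ring
    · ring
  simp only [hsplit, sum_add_distrib, sum_ite_eq, mem_univ, if_true, ← sum_mul, ← mul_sum,
    hu, zero_mul, zero_add]

lemma exists_perm_apply_eq_and_apply_eq {ι : Type*} [DecidableEq ι] {a b c d : ι}
    (hab : a ≠ b) (hcd : c ≠ d) : ∃ σ : Equiv.Perm ι, σ a = c ∧ σ b = d := by
  refine ⟨(Equiv.swap a c).trans (Equiv.swap (Equiv.swap a c b) d), ?_, by simp⟩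
  have hb : Equiv.swap a c b ≠ c := by
    rw [Ne, Equiv.swap_apply_eq_iff, Equiv.swap_apply_right]
    exact hab.symm
  simpa using Equiv.swap_apply_of_ne_of_ne hb.symm hcd

lemma sum_sub_Pmean {N : ℕ} {J : Type*} (hN : N ≠ 0) (Y : Fin N → J → ℝ) (j : J) :
    ∑ i, (Y i j - Pmean Y j) = 0 := by
  have hN' : (N : ℝ) ≠ 0 := by exact_mod_cast hN
  simp only [sum_sub_distrib, sum_const, card_univ, Fintype.card_fin, nsmul_eq_mul, Pmean]
  field_simp
  ring

namespace CompleteRandomization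

def ind {N : ℕ} {J : Type*} [DecidableEq J] (i : Fin N) (j : J) (T : Fin N → J) : ℝ :=
  if T i = j then 1 else 0

lemma ind_mul_ind_self {N : ℕ} {J : Type*} [DecidableEq J] (i : Fin N) (j j' : J)
    (T : Fin N → J) : ind i j T * ind i j' T = if j = j' then ind i j T else 0 := by
  unfold ind
  split_ifs <;> simp_all

/-- `E[1{T i = j} 1{T i = j'}] - E[1{T i = j} 1{T i' = j'}]` for `i ≠ i'`. -/
noncomputable def momentGap {J : Type*} [DecidableEq J] (N : ℕ) (Nj : J → ℕ) (j j' : J) : ℝ :=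
  ((if j = j' then (Nj j : ℝ) else 0) - Nj j * Nj j' / N) / (N - 1)

variable {N : ℕ} {J : Type*} [Fintype J] [DecidableEq J] {Nj : J → ℕ}

lemma mem_assignments {T : Fin N → J} :
    T ∈ assignments N Nj ↔ ∀ j, #{i | T i = j} = Nj j := by
  simp [assignments]

lemma assignments_nonempty (hsum : ∑ j, Nj j = N) : (assignments N Nj).Nonempty := by
  have hcard : Fintype.card (Σ j, Fin (Nj j)) = Fintype.card (Fin N) := by
    simp [Fintype.card_sigma, hsum]
  let e : (Σ j, Fin (Nj j)) ≃ Fin N := Fintype.equivOfCardEq hcard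
  refine ⟨fun i => (e.symm i).1, mem_assignments.2 fun j => ?_⟩
  have hfiber : ({i | (e.symm i).1 = j} : Finset (Fin N)) =
      ({s | s.1 = j} : Finset (Σ j', Fin (Nj j'))).map e.toEmbedding := by
    ext i
    simp only [mem_filter, mem_univ, true_and, mem_map_equiv]
  rw [hfiber, card_map, card_filter, ← univ_sigma_univ, sum_sigma]
  simp [apply_ite card]

lemma comp_perm_mem_assignments (σ : Equiv.Perm (Fin N)) {T : Fin N → J}
    (hT : T ∈ assignments N Nj) : T ∘ σ ∈ assignments N Nj := by
  rw [mem_assignments] at hT ⊢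
  intro j
  rw [← hT j]
  exact card_bij' (fun i _ => σ i) (fun i _ => σ.symm i) (by simp) (by simp) (by simp) (by simp)

lemma expect_comp_perm (σ : Equiv.Perm (Fin N)) (F : (Fin N → J) → ℝ) :
    expect Nj (fun T => F (T ∘ σ)) = expect Nj F := by
  unfold _root_.expect
  congr 1
  exact sum_nbij' (· ∘ σ) (· ∘ σ.symm) (fun T hT => comp_perm_mem_assignments σ hT)
    (fun T hT => comp_perm_mem_assignments σ.symm hT) (fun T _ => by ext; simp)
    (fun T _ => by ext; simp) (fun T _ => rfl)

lemma expect_congr {f g : (Fin N → J) → ℝ} (h : ∀ T ∈ assignments N Nj, f T = g T) :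
    expect Nj f = expect Nj g := by
  unfold _root_.expect
  rw [sum_congr rfl h]

lemma expect_const (hne : (assignments N Nj).Nonempty) (a : ℝ) :
    expect Nj (fun (_ : Fin N → J) => a) = a := by
  have hM : (#(assignments N Nj) : ℝ) ≠ 0 := by exact_mod_cast hne.card_ne_zero
  simp [_root_.expect, hM]

lemma expect_zero : expect Nj (fun (_ : Fin N → J) => (0 : ℝ)) = 0 := by
  simp [_root_.expect]

lemma expect_const_add (hne : (assignments N Nj).Nonempty) (a : ℝ) (f : (Fin N → J) → ℝ) :
    expect Nj (fun T => a + f T) = a + expect Nj f := by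
  have hM : (#(assignments N Nj) : ℝ) ≠ 0 := by exact_mod_cast hne.card_ne_zero
  simp only [_root_.expect, sum_add_distrib, sum_const, nsmul_eq_mul, add_div]
  field_simp

lemma expect_sum {α : Type*} (s : Finset α) (f : α → (Fin N → J) → ℝ) :
    expect Nj (fun T => ∑ x ∈ s, f x T) = ∑ x ∈ s, expect Nj (f x) := by
  unfold _root_.expect
  rw [sum_comm, sum_div]

lemma expect_const_mul (c : ℝ) (f : (Fin N → J) → ℝ) :
    expect Nj (fun T => c * f T) = c * expect Nj f := by
  unfold _root_.expect
  rw [← mul_sum, mul_div_assoc]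

lemma rvar_congr_const_add (hne : (assignments N Nj).Nonempty) {f g : (Fin N → J) → ℝ}
    (a : ℝ) (h : ∀ T ∈ assignments N Nj, f T = a + g T) : rvar Nj f = rvar Nj g := by
  have hmean : expect Nj f = a + expect Nj g := by
    rw [expect_congr h, expect_const_add hne]
  unfold rvar
  exact expect_congr fun T hT => by rw [h T hT, hmean, add_sub_add_left_eq_sub]

lemma rvar_eq_expect_sq {f : (Fin N → J) → ℝ} (h : expect Nj f = 0) :
    rvar Nj f = expect Nj (fun T => f T ^ 2) := by
  simp [rvar, h]

lemma sum_ind_of_mem {T : Fin N → J} (hT : T ∈ assignments N Nj) (j : J) :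
    ∑ i, ind i j T = Nj j := by
  rw [mem_assignments] at hT
  simp only [ind, sum_boole, hT j]

lemma expect_ind (hsum : ∑ j, Nj j = N) (i : Fin N) (j : J) :
    expect Nj (ind i j) = Nj j / N := by
  have hN : (N : ℝ) ≠ 0 := by exact_mod_cast i.pos.ne'
  have hconst : ∀ i', expect Nj (ind i' j) = expect Nj (ind i j) := fun i' => by
    have h : expect Nj (ind (Equiv.swap i i' i) j) = expect Nj (ind i j) :=
      expect_comp_perm _ (ind i j)
    simpa using h
  have htotal : ∑ i' : Fin N, expect Nj (ind i' j) = Nj j := by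
    rw [← expect_sum, expect_congr (fun T hT => sum_ind_of_mem hT j),
      expect_const (assignments_nonempty hsum)]
  simp only [hconst, sum_const, card_univ, Fintype.card_fin, nsmul_eq_mul] at htotal
  rw [eq_div_iff hN, ← htotal, mul_comm]

lemma expect_ind_mul_ind_self (hsum : ∑ j, Nj j = N) (i : Fin N) (j j' : J) :
    expect Nj (fun T => ind i j T * ind i j' T) = if j = j' then (Nj j : ℝ) / N else 0 := by
  simp only [ind_mul_ind_self]
  split_ifs
  · exact expect_ind hsum i j
  · exact expect_zero

lemma expect_ind_mul_ind_eq_of_ne {a b i i' : Fin N} (hab : a ≠ b) (hii' : i ≠ i') (j j' : J) :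
    expect Nj (fun T => ind i j T * ind i' j' T) = expect Nj (fun T => ind a j T * ind b j' T) := by
  obtain ⟨σ, rfl, rfl⟩ := exists_perm_apply_eq_and_apply_eq hab hii'
  exact expect_comp_perm σ (fun T => ind a j T * ind b j' T)

lemma sum_expect_ind_mul_ind (hsum : ∑ j, Nj j = N) (i : Fin N) (j j' : J) :
    ∑ i', expect Nj (fun T => ind i j T * ind i' j' T) = Nj j * Nj j' / N := by
  rw [← expect_sum, expect_congr (g := fun T => Nj j' * ind i j T) fun T hT => by
    rw [← mul_sum, sum_ind_of_mem hT, mul_comm], expect_const_mul, expect_ind hsum]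
  ring

lemma expect_sum_mul_ind_mul_sum_mul_ind (hN : 2 ≤ N) (hsum : ∑ j, Nj j = N)
    {u : Fin N → ℝ} (hu : ∑ i, u i = 0) (v : Fin N → ℝ) (j j' : J) :
    expect Nj (fun T => (∑ i, u i * ind i j T) * (∑ i, v i * ind i j' T))
      = momentGap N Nj j j' * ∑ i, u i * v i := by
  set a : Fin N := ⟨0, by omega⟩
  set b : Fin N := ⟨1, by omega⟩
  have hab : a ≠ b := by simp [a, b, Fin.ext_iff]
  set α := expect Nj (fun T => ind a j T * ind a j' T)
  set β := expect Nj (fun T => ind a j T * ind b j' T)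
  have hmoment : ∀ i i' : Fin N, expect Nj (fun T => ind i j T * ind i' j' T)
      = if i = i' then α else β := by
    intro i i'
    split_ifs with h
    · subst h
      exact (expect_ind_mul_ind_self hsum i j j').trans (expect_ind_mul_ind_self hsum a j j').symm
    · exact expect_ind_mul_ind_eq_of_ne hab h j j'
  have hrow : α + (N - 1) * β = Nj j * Nj j' / N := by
    rw [← sum_expect_ind_mul_ind hsum a, sum_congr rfl fun i' _ => hmoment a i',
      ← add_sum_erase _ _ (mem_univ a), if_pos rfl,
      sum_congr rfl fun i hi => if_neg (ne_of_mem_erase hi).symm, sum_const,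
      card_erase_of_mem (mem_univ a), card_univ, Fintype.card_fin, nsmul_eq_mul,
      Nat.cast_sub (by omega), Nat.cast_one]
  have hdiag : N * α = if j = j' then (Nj j : ℝ) else 0 := by
    have hN0 : (N : ℝ) ≠ 0 := by positivity
    rw [show α = _ from expect_ind_mul_ind_self hsum a j j']
    split_ifs
    · field_simp
    · rw [mul_zero]
  have hN1 : (N : ℝ) - 1 ≠ 0 := by
    have : (2 : ℝ) ≤ N := by exact_mod_cast hN
    linarith
  calc expect Nj (fun T => (∑ i, u i * ind i j T) * (∑ i, v i * ind i j' T))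
      = ∑ i, ∑ i', u i * v i' * (if i = i' then α else β) := by
        simp only [sum_mul_sum, expect_sum, ← hmoment, ← expect_const_mul]
        exact sum_congr rfl fun i _ => sum_congr rfl fun i' _ => congrArg _ (by ext; ring)
    _ = (α - β) * ∑ i, u i * v i := sum_sum_mul_mul_ite_eq u v hu α β
    _ = _ := by
        rw [momentGap]
        congr 1
        rw [← hdiag, eq_div_iff hN1]
        linear_combination -hrow

lemma pObs_eq_Pmean_add {T : Fin N → J} (hT : T ∈ assignments N Nj) (Y : Fin N → J → ℝ)
    {j : J} (hj : Nj j ≠ 0) :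
    pObs Y Nj j T = Pmean Y j + (∑ i, (Y i j - Pmean Y j) * ind i j T) / Nj j := by
  have hobs : ∑ i ∈ {i | T i = j}, Y i j = ∑ i, Y i j * ind i j T := by
    rw [sum_filter]
    exact sum_congr rfl fun i _ => by simp [ind]
  have hNj : (Nj j : ℝ) ≠ 0 := by exact_mod_cast hj
  rw [pObs, hobs]
  simp only [sub_mul, sum_sub_distrib, ← mul_sum, sum_ind_of_mem hT]
  field_simp
  ring

lemma expect_sum_sum_mul_ind (hsum : ∑ j, Nj j = N) {w : J → Fin N → ℝ}
    (hw : ∀ j, ∑ i, w j i = 0) :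
    expect Nj (fun T => ∑ j, ∑ i, w j i * ind i j T) = 0 := by
  simp only [expect_sum, expect_const_mul, expect_ind hsum, ← sum_mul, hw, zero_mul,
    sum_const_zero]

lemma expect_sq_sum_sum_mul_ind (hN : 2 ≤ N) (hsum : ∑ j, Nj j = N) {w : J → Fin N → ℝ}
    (hw : ∀ j, ∑ i, w j i = 0) :
    expect Nj (fun T => (∑ j, ∑ i, w j i * ind i j T) ^ 2)
      = ∑ j, ∑ j', momentGap N Nj j j' * ∑ i, w j i * w j' i := by
  have hexpand : ∀ T, (∑ j, ∑ i, w j i * ind i j T) ^ 2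
      = ∑ j, ∑ j', (∑ i, w j i * ind i j T) * (∑ i, w j' i * ind i j' T) := fun T => by
    rw [sq, sum_mul_sum]
  simp only [hexpand, expect_sum, expect_sum_mul_ind_mul_sum_mul_ind hN hsum (hw _)]

lemma sum_sum_momentGap_mul_eq (hN : 2 ≤ N) (hpos : ∀ j, 0 < Nj j) (D : Fin N → J → ℝ)
    (c : J → ℝ) :
    ∑ j, ∑ j', momentGap N Nj j j' * ∑ i, c j * D i j / Nj j * (c j' * D i j' / Nj j')
      = ∑ j, c j ^ 2 * ((∑ i, D i j ^ 2) / (N - 1)) / Nj j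
        - (∑ i, (∑ j, c j * D i j) ^ 2) / (N - 1) / N := by
  have hN1 : (N : ℝ) - 1 ≠ 0 := by
    have : (2 : ℝ) ≤ N := by exact_mod_cast hN
    linarith
  have hN0 : (N : ℝ) ≠ 0 := by positivity
  have hterm : ∀ j j', momentGap N Nj j j' * ∑ i, c j * D i j / Nj j * (c j' * D i j' / Nj j')
      = (if j = j' then c j ^ 2 * ((∑ i, D i j ^ 2) / (N - 1)) / Nj j else 0)
        - c j * c j' * (∑ i, D i j * D i j') / (N - 1) / N := by
    intro j j'
    have hj : (Nj j : ℝ) ≠ 0 := by exact_mod_cast (hpos j).ne'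
    have hj' : (Nj j' : ℝ) ≠ 0 := by exact_mod_cast (hpos j').ne'
    have hw2 : ∑ i, c j * D i j / Nj j * (c j' * D i j' / Nj j')
        = c j * c j' / (Nj j * Nj j') * ∑ i, D i j * D i j' := by
      rw [mul_sum]
      exact sum_congr rfl fun i _ => by field_simp
    rw [momentGap, hw2]
    split_ifs with h
    · subst h
      simp only [sq]
      field_simp
    · field_simp
      ring
  have hcross : ∑ i, (∑ j, c j * D i j) ^ 2 = ∑ j, ∑ j', c j * c j' * ∑ i, D i j * D i j' := by
    simp only [sq, sum_mul_sum]
    simp only [mul_sum]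
    rw [sum_comm]
    refine sum_congr rfl fun j _ => ?_
    rw [sum_comm]
    exact sum_congr rfl fun j' _ => sum_congr rfl fun i _ => by ring
  simp only [hterm, sum_sub_distrib, sum_ite_eq, mem_univ, if_true, hcross, sum_div]

theorem rvar_sum_mul_pObs (hN : 2 ≤ N) (hpos : ∀ j, 0 < Nj j) (hsum : ∑ j, Nj j = N)
    (Y : Fin N → J → ℝ) (c : J → ℝ) :
    rvar Nj (fun T => ∑ j, c j * pObs Y Nj j T) =
      ∑ j, c j ^ 2 * S2 Y j / Nj j
        - (∑ i, (∑ j, c j * (Y i j - Pmean Y j)) ^ 2) / (N - 1) / N := by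
  set w : J → Fin N → ℝ := fun j i => c j * (Y i j - Pmean Y j) / Nj j
  have hw : ∀ j, ∑ i, w j i = 0 := fun j => by
    simp only [w, ← sum_div, ← mul_sum, sum_sub_Pmean (N := N) (by omega), mul_zero, zero_div]
  have hdecomp : ∀ T ∈ assignments N Nj, ∑ j, c j * pObs Y Nj j T
      = ∑ j, c j * Pmean Y j + ∑ j, ∑ i, w j i * ind i j T := by
    intro T hT
    simp only [pObs_eq_Pmean_add hT Y (hpos _).ne', mul_add, sum_add_distrib, sum_div, mul_sum]
    congr 1
    exact sum_congr rfl fun j _ => sum_congr rfl fun i _ => by simp only [w]; ring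
  rw [rvar_congr_const_add (assignments_nonempty hsum) _ hdecomp,
    rvar_eq_expect_sq (expect_sum_sum_mul_ind hsum hw), expect_sq_sum_sum_mul_ind hN hsum hw]
  exact sum_sum_momentGap_mul_eq hN hpos (fun i j => Y i j - Pmean Y j) c

end CompleteRandomization

lemma lam_sq {K : ℕ} (ℓ : Finset (Fin K)) (z : Fin K → Bool) : lam ℓ z ^ 2 = 1 := by
  rw [lam, ← prod_pow]
  exact prod_eq_one fun k _ => by split_ifs <;> norm_num

lemma tauUnit_sub_tauFP {N K : ℕ} (Y : Fin N → (Fin K → Bool) → ℝ) (i : Fin N)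
    (ℓ : Finset (Fin K)) :
    tauUnit Y i ℓ - tauFP Y ℓ = ∑ z, lam ℓ z / 2 ^ (K - 1) * (Y i z - Pmean Y z) := by
  simp only [tauUnit, tauFP, ← mul_sub, ← sum_sub_distrib, mul_sum]
  exact sum_congr rfl fun z _ => by ring

theorem rvar_tauHat_general {N K : ℕ} (hN : 2 ≤ N)
    (Y : Fin N → (Fin K → Bool) → ℝ) (Nj : (Fin K → Bool) → ℕ)
    (hpos : ∀ z, 1 ≤ Nj z) (hsum : ∑ z, Nj z = N)
    (ℓ : Finset (Fin K)) :
    rvar Nj (tauHat Y Nj ℓ) =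
      (1 / 2 ^ (2 * (K - 1))) * (∑ z, S2 Y z / (Nj z : ℝ)) - S2tau Y ℓ / (N : ℝ) := by
  set c : (Fin K → Bool) → ℝ := fun z => lam ℓ z / 2 ^ (K - 1)
  have htauHat : tauHat Y Nj ℓ = fun T => ∑ z, c z * pObs Y Nj z T := by
    ext T
    simp only [tauHat, c, mul_sum]
    exact sum_congr rfl fun z _ => by ring
  have hc : ∀ z, c z ^ 2 = 1 / 2 ^ (2 * (K - 1)) := fun z => by
    rw [div_pow, lam_sq, ← pow_mul, mul_comm]
  rw [htauHat, CompleteRandomization.rvar_sum_mul_pObs hN hpos hsum, mul_sum]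
  simp only [hc, mul_div_assoc, S2tau, tauUnit_sub_tauFP, c]

/-- Variance of the factorial effect estimator: in a completely randomized `2^K` factorial
experiment, for every nonempty subset `ℓ`,
`Var(τ̂_ℓ) = 2^{-2(K-1)} Σ_z S_z²/N_z - S²_{τ_ℓ}/N`. -/
theorem rvar_tauHat {N K : ℕ} (hN : 2 ≤ N)
    (Y : Fin N → (Fin K → Bool) → ℝ) (Nj : (Fin K → Bool) → ℕ)
    (hpos : ∀ z, 1 ≤ Nj z) (hsum : ∑ z, Nj z = N)
    (ℓ : Finset (Fin K)) (hℓ : ℓ.Nonempty) :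
    rvar Nj (tauHat Y Nj ℓ) =
      (1 / 2 ^ (2 * (K - 1))) * (∑ z, S2 Y z / (Nj z : ℝ)) - S2tau Y ℓ / (N : ℝ) :=
  rvar_tauHat_general hN Y Nj hpos hsum ℓ
end
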